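/- The product of two normal pattern subgroups is the pattern subgroup of the union of the posets: if O and P are subposets of R with UT_O, UT_P normal in UT_R, then the set product UT_O · UT_P equals UT_{O∪P}, where i ≤_{O∪P} j iff i ≤_O j or i ≤_P j; in particular O∪P is again a partial order in this situation. -/

import Mathlib

open scoped Pointwise

/-- The pattern group `UT_r` as a set of invertible matrices. -/
def UTset {A F : Type*} [Fintype A] [DecidableEq A] [Field F]
    (r : A → A → Prop) : Set (Matrix A A F)ˣ :=
  {u | (∀ i, (u : Matrix A A F) i i = 1) ∧
       ∀ i j, ¬ r i j → (u : Matrix A A F) i j = 0}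

/-!
Normality of `UT_q` in `UT_r` forces the pattern `q` to be upward closed: conjugating the
transvection `1 + E_ij` (with `q i j`) by `1 + E_i'i` or `1 + E_jj'` produces a nonzero entry at
`(i', j)` resp. `(i, j')`. Upward closedness makes `o ∪ p` transitive. For the product, take
`w ∈ UT_{o∪p}` and an entry `(i, j)` of `w` outside `o`, with `j` maximal. Left multiplication by
the transvection `1 - w_ij E_ij ∈ UT_p` clears it, and only changes row `i` by a multiple of row
`j`; the entries of row `j` lie in `o`, and upward closedness keeps the new ones of row `i` in `o`.
Induction on the number of entries outside `o` finishes: `g w = u v` gives `w = (g⁻¹ u g) (g⁻¹ v)`,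
and `g⁻¹ u g ∈ UT_o` by normality.
-/

section PatternGroups

open Matrix

variable {A F : Type*} [Fintype A] [DecidableEq A] [Field F]

variable (F) in
def NormalizesUTset (r q : A → A → Prop) : Prop :=
  ∀ g ∈ UTset (F := F) r, ∀ u ∈ UTset (F := F) q, g * u * g⁻¹ ∈ UTset (F := F) q

lemma UTset_mono {q q' : A → A → Prop} (h : ∀ i j, q i j → q' i j) :
    UTset (F := F) q ⊆ UTset q' :=
  fun _ hu => ⟨hu.1, fun i j hij => hu.2 i j (mt (h i j) hij)⟩

lemma rel_of_mem_UTset {q : A → A → Prop} {u : (Matrix A A F)ˣ} (hu : u ∈ UTset q) {i j : A}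
    (h : (u : Matrix A A F) i j ≠ 0) : q i j :=
  by_contra fun hq => h (hu.2 i j hq)

lemma one_mem_UTset {q : A → A → Prop} [Std.Refl q] : (1 : (Matrix A A F)ˣ) ∈ UTset q :=
  ⟨fun _ => one_apply_eq _, fun _ _ h => one_apply_ne fun e => h (e ▸ refl_of q _)⟩

lemma mul_mem_UTset {q₁ q₂ q : A → A → Prop}
    (hanti : ∀ a k, q₁ a k → q₂ k a → a = k) (hcomp : ∀ a k b, q₁ a k → q₂ k b → q a b)
    {u v : (Matrix A A F)ˣ} (hu : u ∈ UTset q₁) (hv : v ∈ UTset q₂) : u * v ∈ UTset q := by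
  have hterm : ∀ a k b, (u : Matrix A A F) a k * (v : Matrix A A F) k b ≠ 0 →
      q₁ a k ∧ q₂ k b := fun a k b h =>
    ⟨rel_of_mem_UTset hu (left_ne_zero_of_mul h), rel_of_mem_UTset hv (right_ne_zero_of_mul h)⟩
  refine ⟨fun a => ?_, fun a b hab => ?_⟩
  · rw [Units.val_mul, mul_apply, Finset.sum_eq_single a, hu.1, hv.1, one_mul]
    · exact fun k _ hk => by_contra fun h =>
        hk (hanti a k (hterm a k a h).1 (hterm a k a h).2).symm
    · exact fun ha => absurd (Finset.mem_univ a) ha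
  · rw [Units.val_mul, mul_apply]
    exact Finset.sum_eq_zero fun k _ => by_contra fun h =>
      hab (hcomp a k b (hterm a k b h).1 (hterm a k b h).2)

lemma mul_mem_UTset_self {q : A → A → Prop} [IsPartialOrder A q] {u v : (Matrix A A F)ˣ}
    (hu : u ∈ UTset q) (hv : v ∈ UTset q) : u * v ∈ UTset q :=
  mul_mem_UTset (fun _ _ => antisymm) (fun _ _ _ => trans_of q) hu hv

def transvectionUnit {i j : A} (hij : i ≠ j) (c : F) : (Matrix A A F)ˣ where
  val := transvection i j c
  inv := transvection i j (-c)
  val_inv := by rw [transvection_mul_transvection_same _ _ hij, add_neg_cancel, transvection_zero]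
  inv_val := by rw [transvection_mul_transvection_same _ _ hij, neg_add_cancel, transvection_zero]

@[simp]
lemma coe_transvectionUnit {i j : A} (hij : i ≠ j) (c : F) :
    (transvectionUnit hij c : Matrix A A F) = transvection i j c :=
  rfl

lemma transvectionUnit_inv {i j : A} (hij : i ≠ j) (c : F) :
    (transvectionUnit hij c)⁻¹ = transvectionUnit hij (-c) :=
  Units.ext rfl

lemma transvectionUnit_mem_UTset {q : A → A → Prop} [Std.Refl q] {i j : A} (hij : i ≠ j)
    (hq : q i j) (c : F) : transvectionUnit hij c ∈ UTset q := by
  refine ⟨fun a => ?_, fun a b hab => ?_⟩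
  · have : ¬(i = a ∧ j = a) := fun ⟨hi, hj⟩ => hij (hi.trans hj.symm)
    simp [transvectionUnit, transvection, single_apply_of_ne (h := this)]
  · have hne : a ≠ b := fun e => hab (e ▸ refl_of q a)
    have : ¬(i = a ∧ j = b) := fun ⟨hi, hj⟩ => hab (hi ▸ hj ▸ hq)
    simp [transvectionUnit, transvection, one_apply_ne hne, single_apply_of_ne (h := this)]

lemma transvectionUnit_conj_apply_row (u : (Matrix A A F)ˣ) {a i j : A} (hai : a ≠ i) (c : F)
    (hj : j ≠ i) :
    ((transvectionUnit hai c * u * (transvectionUnit hai c)⁻¹ : (Matrix A A F)ˣ) :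
      Matrix A A F) a j = (u : Matrix A A F) a j + c * (u : Matrix A A F) i j := by
  rw [transvectionUnit_inv, Units.val_mul, Units.val_mul, coe_transvectionUnit,
    coe_transvectionUnit, mul_transvection_apply_of_ne _ _ _ _ hj, transvection_mul_apply_same]

lemma transvectionUnit_conj_apply_col (u : (Matrix A A F)ˣ) {i j b : A} (hjb : j ≠ b) (c : F)
    (hi : i ≠ j) :
    ((transvectionUnit hjb c * u * (transvectionUnit hjb c)⁻¹ : (Matrix A A F)ˣ) :
      Matrix A A F) i b = (u : Matrix A A F) i b - c * (u : Matrix A A F) i j := by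
  rw [transvectionUnit_inv, Units.val_mul, Units.val_mul, coe_transvectionUnit,
    coe_transvectionUnit, mul_transvection_apply_same, transvection_mul_apply_of_ne _ _ _ _ hi,
    transvection_mul_apply_of_ne _ _ _ _ hi, neg_mul, sub_eq_add_neg]

section Normal

variable {r q : A → A → Prop} [Std.Refl r] [Std.Refl q]

lemma rel_of_normalizes_of_rel_left (hn : NormalizesUTset F r q) {i j i' : A} (hq : q i j)
    (hij : i ≠ j) (hi : r i' i) : q i' j := by
  by_cases hii : i' = i
  · exact hii ▸ hq
  by_contra hq'
  have hu := transvectionUnit_mem_UTset hij hq (1 : F)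
  have hentry := (hn _ (transvectionUnit_mem_UTset hii hi 1) _ hu).2 i' j hq'
  rw [transvectionUnit_conj_apply_row _ hii _ (Ne.symm hij), hu.2 i' j hq'] at hentry
  simp [transvection, hij] at hentry

lemma rel_of_normalizes_of_rel_right (hn : NormalizesUTset F r q) {i j j' : A} (hq : q i j)
    (hij : i ≠ j) (hj : r j j') : q i j' := by
  by_cases hjj : j = j'
  · exact hjj ▸ hq
  by_contra hq'
  have hu := transvectionUnit_mem_UTset hij hq (1 : F)
  have hentry := (hn _ (transvectionUnit_mem_UTset hjj hj 1) _ hu).2 i j' hq'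
  rw [transvectionUnit_conj_apply_col _ hjj _ hij, hu.2 i j' hq'] at hentry
  simp [transvection, hij] at hentry

end Normal

lemma isPartialOrder_or {r o p : A → A → Prop} [IsPartialOrder A r] [IsPartialOrder A o]
    [IsPartialOrder A p] (hos : ∀ i j, o i j → r i j) (hps : ∀ i j, p i j → r i j)
    (hno : NormalizesUTset F r o) (hnp : NormalizesUTset F r p) :
    IsPartialOrder A (fun i j => o i j ∨ p i j) where
  refl a := Or.inl (refl_of o a)
  trans a b c := by
    rintro (hab | hab) (hbc | hbc)
    · exact Or.inl (trans_of o hab hbc)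
    · by_cases e : a = b
      · exact Or.inr (e ▸ hbc)
      · exact Or.inl (rel_of_normalizes_of_rel_right hno hab e (hps b c hbc))
    · by_cases e : a = b
      · exact Or.inl (e ▸ hbc)
      · exact Or.inr (rel_of_normalizes_of_rel_right hnp hab e (hos b c hbc))
    · exact Or.inr (trans_of p hab hbc)
  antisymm a b hab hba := antisymm (hab.elim (hos a b) (hps a b)) (hba.elim (hos b a) (hps b a))

def entriesOutside (q : A → A → Prop) (M : Matrix A A F) : Set (A × A) :=
  {x | ¬ q x.1 x.2 ∧ M x.1 x.2 ≠ 0}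

lemma exists_mem_entriesOutside_forall_notMem_row {r q : A → A → Prop} [IsPartialOrder A r]
    [Std.Refl q] {w : (Matrix A A F)ˣ} (hw : w ∈ UTset r)
    (h : (entriesOutside q (w : Matrix A A F)).Nonempty) :
    ∃ i j, (i, j) ∈ entriesOutside q (w : Matrix A A F) ∧
      ∀ b, (j, b) ∉ entriesOutside q (w : Matrix A A F) := by
  let : LE A := ⟨r⟩
  have : IsTrans A (· ≤ ·) := inferInstanceAs (IsTrans A r)
  obtain ⟨⟨i, j⟩, hij, hmax⟩ := Set.Finite.exists_maximalFor Prod.snd _ (Set.toFinite _) h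
  refine ⟨i, j, hij, fun b hjb => hjb.1 ?_⟩
  have hrjb : r j b := rel_of_mem_UTset hw hjb.2
  obtain rfl : j = b := antisymm hrjb (hmax hjb hrjb)
  exact refl_of q j

lemma entriesOutside_transvection_mul_subset {r o : A → A → Prop} [Std.Refl r] [Std.Refl o]
    (hno : NormalizesUTset F r o) {w : (Matrix A A F)ˣ} (hw : w ∈ UTset r) {i j : A}
    (hij : (i, j) ∈ entriesOutside o (w : Matrix A A F))
    (hrow : ∀ b, (j, b) ∉ entriesOutside o (w : Matrix A A F)) :
    entriesOutside o (transvection i j (-(w : Matrix A A F) i j) * (w : Matrix A A F)) ⊆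
      entriesOutside o (w : Matrix A A F) \ {(i, j)} := by
  have hrij : r i j := rel_of_mem_UTset hw hij.2
  rintro ⟨a, b⟩ ⟨hab, hentry⟩
  by_cases hai : a = i
  · subst hai
    rw [transvection_mul_apply_same] at hentry
    have hjb : (w : Matrix A A F) j b = 0 := by
      by_contra hjb
      have hojb : o j b := by_contra fun hojb => hrow b ⟨hojb, hjb⟩
      by_cases e : j = b
      · subst e
        simp [hw.1] at hentry
      · exact hab (rel_of_normalizes_of_rel_left hno hojb e hrij)
    have hbj : b ≠ j := by
      rintro rfl
      simp [hw.1] at hjb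
    rw [hjb, mul_zero, add_zero] at hentry
    exact ⟨⟨hab, hentry⟩, by simp [hbj]⟩
  · rw [transvection_mul_apply_of_ne _ _ _ _ hai] at hentry
    exact ⟨⟨hab, hentry⟩, by simp [hai]⟩

lemma mem_UTset_mul_of_mul_mem {r o p : A → A → Prop} [IsPartialOrder A p]
    (hno : NormalizesUTset F r o) (hps : ∀ i j, p i j → r i j) {g w : (Matrix A A F)ˣ}
    (hg : g⁻¹ ∈ UTset p) (h : g * w ∈ UTset o * UTset p) : w ∈ UTset o * UTset p := by
  obtain ⟨u, hu, v, hv, huv⟩ := h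
  have hconj := hno _ (UTset_mono hps hg) _ hu
  rw [inv_inv] at hconj
  have hw : g⁻¹ * u * g * (g⁻¹ * v) = w := by
    rw [← inv_mul_cancel_left g w, ← huv]
    group
  exact hw ▸ Set.mul_mem_mul hconj (mul_mem_UTset_self hg hv)

lemma mem_UTset_mul_of_mem_UTset_or {r o p : A → A → Prop} [IsPartialOrder A r]
    [IsPartialOrder A o] [IsPartialOrder A p] (hos : ∀ i j, o i j → r i j)
    (hps : ∀ i j, p i j → r i j) (hno : NormalizesUTset F r o) (hnp : NormalizesUTset F r p)
    {w : (Matrix A A F)ˣ} (hw : w ∈ UTset (fun i j => o i j ∨ p i j)) :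
    w ∈ UTset o * UTset p := by
  have := isPartialOrder_or hos hps hno hnp
  have hor_r : ∀ i j, o i j ∨ p i j → r i j := fun i j h => h.elim (hos i j) (hps i j)
  induction h : (entriesOutside o (w : Matrix A A F)).ncard using Nat.strong_induction_on
    generalizing w with
  | _ n ih =>
  rcases (entriesOutside o (w : Matrix A A F)).eq_empty_or_nonempty with hempty | hnonempty
  · have hwo : w ∈ UTset o :=
      ⟨hw.1, fun a b hab => by_contra fun hab' =>
        Set.eq_empty_iff_forall_notMem.mp hempty (a, b) ⟨hab, hab'⟩⟩
    simpa using Set.mul_mem_mul hwo one_mem_UTset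
  obtain ⟨i, j, hij, hrow⟩ :=
    exists_mem_entriesOutside_forall_notMem_row (UTset_mono hor_r hw) hnonempty
  have hpij : p i j := (rel_of_mem_UTset hw hij.2).resolve_left hij.1
  have hne : i ≠ j := fun e => hij.1 (e ▸ refl_of o i)
  set g := transvectionUnit hne (-(w : Matrix A A F) i j)
  have hgw : g * w ∈ UTset (fun i j => o i j ∨ p i j) :=
    mul_mem_UTset_self (transvectionUnit_mem_UTset hne (Or.inr hpij) _) hw
  have hlt : (entriesOutside o ((g * w : (Matrix A A F)ˣ) : Matrix A A F)).ncard < n :=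
    h ▸ (Set.ncard_le_ncard (entriesOutside_transvection_mul_subset hno
      (UTset_mono hor_r hw) hij hrow)).trans_lt (Set.ncard_sdiff_singleton_lt_of_mem hij)
  refine mem_UTset_mul_of_mul_mem hno hps ?_ (ih _ hlt hgw rfl)
  rw [transvectionUnit_inv]
  exact transvectionUnit_mem_UTset hne hpij _

end PatternGroups

theorem pattern_subgroup_mul_general
    {A F : Type*} [Fintype A] [DecidableEq A] [Field F]
    (r o p : A → A → Prop)
    (hr : IsPartialOrder A r) (ho : IsPartialOrder A o) (hp : IsPartialOrder A p)
    (hos : ∀ i j, o i j → r i j) (hps : ∀ i j, p i j → r i j)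
    (hno : ∀ g ∈ UTset (F := F) r, ∀ u ∈ UTset (F := F) o,
        g * u * g⁻¹ ∈ UTset (F := F) o)
    (hnp : ∀ g ∈ UTset (F := F) r, ∀ u ∈ UTset (F := F) p,
        g * u * g⁻¹ ∈ UTset (F := F) p) :
    IsPartialOrder A (fun i j => o i j ∨ p i j) ∧
    UTset (F := F) o * UTset (F := F) p
      = UTset (F := F) (fun i j => o i j ∨ p i j) := by
  have hor := isPartialOrder_or hos hps hno hnp
  refine ⟨hor, Set.Subset.antisymm ?_ fun w hw => mem_UTset_mul_of_mem_UTset_or hos hps hno hnp hw⟩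
  rintro _ ⟨u, hu, v, hv, rfl⟩
  exact mul_mem_UTset_self (UTset_mono (fun _ _ => Or.inl) hu) (UTset_mono (fun _ _ => Or.inr) hv)

/-- For normal pattern subgroups, `UT_O · UT_P = UT_{O ∪ P}`, and the union
relation is again a partial order. -/
theorem pattern_subgroup_mul
    {A F : Type*} [Fintype A] [DecidableEq A] [Field F] [Fintype F]
    (r o p : A → A → Prop)
    (hr : IsPartialOrder A r) (ho : IsPartialOrder A o) (hp : IsPartialOrder A p)
    (hos : ∀ i j, o i j → r i j) (hps : ∀ i j, p i j → r i j)
    (hno : ∀ g ∈ UTset (F := F) r, ∀ u ∈ UTset (F := F) o,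
        g * u * g⁻¹ ∈ UTset (F := F) o)
    (hnp : ∀ g ∈ UTset (F := F) r, ∀ u ∈ UTset (F := F) p,
        g * u * g⁻¹ ∈ UTset (F := F) p) :
    IsPartialOrder A (fun i j => o i j ∨ p i j) ∧
    UTset (F := F) o * UTset (F := F) p
      = UTset (F := F) (fun i j => o i j ∨ p i j) :=
  pattern_subgroup_mul_general r o p hr ho hp hos hps hno hnp
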